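/- Let $A \subseteq \{0,1\}^n$ have measure $\mu = |A|/2^n > 0$ and let $f = 1_A/\mu$ be the normalized indicator. Then for every integer $k \geq 1$, $\sum_{|w|=k} \hat{f}(w)^2 \leq \left(e \cdot \max(1, \frac{2\log(1/\mu)}{k})\right)^{k}$, up to replacing the base by a universal constant. -/

import Mathlib

open Finset

/-- The Fourier coefficient `f̂(w) = 𝔼_x[(-1)^{w·x} f(x)]` of `f : {0,1}ⁿ → ℝ`. -/
noncomputable def boolFourier {n : ℕ} (f : (Fin n → Bool) → ℝ) (w : Fin n → Bool) : ℝ :=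
  (∑ x : Fin n → Bool, (-1 : ℝ) ^ (univ.filter fun i => w i && x i).card * f x) / 2 ^ n

/-- The Hamming weight of `w ∈ {0,1}ⁿ`. -/
def hammingWt {n : ℕ} (w : Fin n → Bool) : ℕ := (univ.filter fun i => w i = true).card

/-!
Let `W` be the level-`k` weight of `f = 1_A/μ` and `g = ∑_{|w|=k} f̂(w) χ_w` its level-`k` part,
so that `W = 𝔼[f g]`. As `f` is a probability density bounded by `1/μ`, Jensen's inequality gives
`W^{2m} ≤ 𝔼[f g^{2m}] ≤ μ⁻¹ 𝔼[g^{2m}]`, and the `(2, 2m)`-hypercontractive inequality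
`𝔼[g^{2m}] ≤ (∑_w (2m-1)^{|w|} ĝ(w)²)^m = ((2m-1)^k W)^m` (the dual form of
`‖T_{√(p-1)} f‖₂ ≤ ‖f‖_p`) turns this into `W ≤ μ^{-1/m} (2m-1)^k`.
Choosing `m ≈ log(1/μ)/k` gives the bound with `C = 2e`.

Hypercontractivity is proved by induction on `n`: splitting off the first coordinate writes
`g(b, x) = g₀(x) ± g₁(x)`, and the two-point inequality
`((a+b)^{2m} + (a-b)^{2m})/2 ≤ (a² + (2m-1)b²)^m`, integrated with Minkowski's inequality in
`L^m`, passes the bound from `g₀, g₁` to `g`.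
-/

theorem two_mul_sub_one_nonneg {m : ℕ} (hm : 0 < m) : (0 : ℝ) ≤ 2 * m - 1 := by
  have : (1 : ℝ) ≤ m := by exact_mod_cast hm
  linarith

theorem sum_range_two_mul_add_one {M : Type*} [AddCommMonoid M] (f : ℕ → M) (m : ℕ) :
    ∑ j ∈ range (2 * m + 1), f j =
      ∑ i ∈ range (m + 1), f (2 * i) + ∑ i ∈ range m, f (2 * i + 1) := by
  induction m with
  | zero => simp
  | succ m ih =>
    rw [show 2 * (m + 1) + 1 = 2 * m + 1 + 1 + 1 by ring, sum_range_succ, sum_range_succ, ih,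
      sum_range_succ (fun i => f (2 * i)) (m + 1), sum_range_succ (fun i => f (2 * i + 1)) m,
      show 2 * (m + 1) = 2 * m + 1 + 1 by ring]
    abel

theorem choose_two_mul_two_mul_le (m j : ℕ) :
    ((2 * m).choose (2 * j) : ℝ) ≤ m.choose j * (2 * m - 1) ^ j := by
  induction j with
  | zero => simp
  | succ j ih =>
    rcases lt_or_ge m (j + 1) with hmj | hjm
    · rw [Nat.choose_eq_zero_of_lt hmj, Nat.choose_eq_zero_of_lt (by omega)]
      simp
    have h1 := Nat.choose_succ_right_eq (2 * m) (2 * j)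
    have h2 := Nat.choose_succ_right_eq (2 * m) (2 * j + 1)
    have h3 := Nat.choose_succ_right_eq m j
    rify [show 2 * j + 1 ≤ 2 * m by omega, show 2 * j ≤ 2 * m by omega,
      show j ≤ m by omega] at h1 h2 h3
    have hjm' : (j : ℝ) + 1 ≤ m := by exact_mod_cast hjm
    have hρ : (0 : ℝ) ≤ 2 * m - 1 := by linarith
    have hodd : 2 * (m : ℝ) - 2 * j - 1 ≤ (2 * m - 1) * (2 * j + 1) := by nlinarith
    refine le_of_mul_le_mul_right ?_ (by positivity : (0 : ℝ) < (2 * j + 1) * (2 * j + 2))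
    calc ((2 * m).choose (2 * j + 1 + 1) : ℝ) * ((2 * j + 1) * (2 * j + 2))
        = (2 * m).choose (2 * j) * (2 * (m - j)) * (2 * m - 2 * j - 1) := by
          linear_combination (2 * (j : ℝ) + 1) * h2 + (2 * m - 2 * j - 1) * h1
      _ ≤ m.choose j * (2 * m - 1) ^ j * (2 * (m - j)) * (2 * m - 2 * j - 1) := by
          gcongr <;> linarith
      _ = 2 * (m.choose (j + 1) * (j + 1)) * (2 * m - 1) ^ j * (2 * m - 2 * j - 1) := by
          rw [h3]; ring
      _ ≤ 2 * (m.choose (j + 1) * (j + 1)) * (2 * m - 1) ^ j * ((2 * m - 1) * (2 * j + 1)) := by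
          have := pow_nonneg hρ j
          gcongr
      _ = m.choose (j + 1) * (2 * m - 1) ^ (j + 1) * ((2 * j + 1) * (2 * j + 2)) := by ring

theorem add_pow_add_sub_pow_eq (a b : ℝ) (m : ℕ) :
    (a + b) ^ (2 * m) + (a - b) ^ (2 * m) =
      2 * ∑ i ∈ range (m + 1), ((2 * m).choose (2 * i) : ℝ) * (a ^ 2) ^ i * (b ^ 2) ^ (m - i) := by
  rw [add_pow, sub_eq_add_neg, add_pow, ← sum_add_distrib, sum_range_two_mul_add_one, mul_sum]
  have hodd : ∀ i ∈ range m,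
      a ^ (2 * i + 1) * b ^ (2 * m - (2 * i + 1)) * (2 * m).choose (2 * i + 1)
        + a ^ (2 * i + 1) * (-b) ^ (2 * m - (2 * i + 1)) * (2 * m).choose (2 * i + 1) = 0 := by
    intro i hi
    have : i < m := mem_range.mp hi
    rw [Odd.neg_pow ⟨m - i - 1, by omega⟩]
    ring
  rw [sum_congr rfl hodd, sum_const_zero, add_zero]
  refine sum_congr rfl fun i hi => ?_
  have : i ≤ m := Nat.lt_succ_iff.mp (mem_range.mp hi)
  rw [show 2 * m - 2 * i = 2 * (m - i) by omega, Even.neg_pow ⟨m - i, by ring⟩, pow_mul, pow_mul]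
  ring

theorem add_pow_add_sub_pow_le (a b : ℝ) (m : ℕ) :
    (a + b) ^ (2 * m) + (a - b) ^ (2 * m) ≤ 2 * (a ^ 2 + (2 * m - 1) * b ^ 2) ^ m := by
  rw [add_pow_add_sub_pow_eq, add_pow]
  refine mul_le_mul_of_nonneg_left (sum_le_sum fun i hi => ?_) zero_le_two
  have hi : i ≤ m := Nat.lt_succ_iff.mp (mem_range.mp hi)
  have hcoeff := choose_two_mul_two_mul_le m (m - i)
  rw [show 2 * (m - i) = 2 * m - 2 * i by omega, Nat.choose_symm (by omega),
    Nat.choose_symm hi] at hcoeff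
  calc ((2 * m).choose (2 * i) : ℝ) * (a ^ 2) ^ i * (b ^ 2) ^ (m - i)
      ≤ m.choose i * (2 * m - 1) ^ (m - i) * (a ^ 2) ^ i * (b ^ 2) ^ (m - i) := by gcongr
    _ = (a ^ 2) ^ i * ((2 * m - 1) * b ^ 2) ^ (m - i) * m.choose i := by rw [mul_pow]; ring

theorem sum_add_pow_le_of_sum_pow_le {ι : Type*} (s : Finset ι) {m : ℕ} {G H : ι → ℝ}
    (hG : ∀ i ∈ s, 0 ≤ G i) (hH : ∀ i ∈ s, 0 ≤ H i) {N a b : ℝ} (hN : 0 ≤ N) (ha : 0 ≤ a)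
    (hb : 0 ≤ b) (hGa : ∑ i ∈ s, G i ^ m ≤ N * a ^ m) (hHb : ∑ i ∈ s, H i ^ m ≤ N * b ^ m) :
    ∑ i ∈ s, (G i + H i) ^ m ≤ N * (a + b) ^ m := by
  rcases m.eq_zero_or_pos with rfl | hm
  · simpa using hGa
  have root_le {F : ι → ℝ} {c : ℝ} (hF : ∀ i ∈ s, 0 ≤ F i) (hc : 0 ≤ c)
      (hFc : ∑ i ∈ s, F i ^ m ≤ N * c ^ m) :
      (∑ i ∈ s, F i ^ m) ^ (m⁻¹ : ℝ) ≤ N ^ (m⁻¹ : ℝ) * c := by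
    calc (∑ i ∈ s, F i ^ m) ^ (m⁻¹ : ℝ) ≤ (N * c ^ m) ^ (m⁻¹ : ℝ) := by
          have := sum_nonneg fun i hi => pow_nonneg (hF i hi) m
          gcongr
      _ = N ^ (m⁻¹ : ℝ) * c := by
          rw [Real.mul_rpow hN (by positivity), Real.pow_rpow_inv_natCast hc hm.ne']
  have minkowski := Real.Lp_add_le_of_nonneg s (p := m) (by exact_mod_cast hm) hG hH
  simp only [Real.rpow_natCast, one_div] at minkowski
  have hsum : 0 ≤ ∑ i ∈ s, (G i + H i) ^ m :=
    sum_nonneg fun i hi => pow_nonneg (add_nonneg (hG i hi) (hH i hi)) m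
  calc ∑ i ∈ s, (G i + H i) ^ m = ((∑ i ∈ s, (G i + H i) ^ m) ^ (m⁻¹ : ℝ)) ^ m :=
        (Real.rpow_inv_natCast_pow hsum hm.ne').symm
    _ ≤ (N ^ (m⁻¹ : ℝ) * a + N ^ (m⁻¹ : ℝ) * b) ^ m := by
        refine pow_le_pow_left₀ (Real.rpow_nonneg hsum _) ?_ m
        exact minkowski.trans (add_le_add (root_le hG ha hGa) (root_le hH hb hHb))
    _ = N * (a + b) ^ m := by
        rw [← mul_add, mul_pow, Real.rpow_inv_natCast_pow hN hm.ne']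

section Walsh

variable {n : ℕ}

def walsh (w x : Fin n → Bool) : ℝ := (-1) ^ #{i | w i && x i}

noncomputable def walshSum (c : (Fin n → Bool) → ℝ) (x : Fin n → Bool) : ℝ :=
  ∑ w, c w * walsh w x

noncomputable def noiseStability (ρ : ℝ) (c : (Fin n → Bool) → ℝ) : ℝ :=
  ∑ w, ρ ^ hammingWt w * c w ^ 2

noncomputable def levelWeight (f : (Fin n → Bool) → ℝ) (k : ℕ) : ℝ :=
  ∑ w ∈ univ.filter (fun w => hammingWt w = k), boolFourier f w ^ 2

noncomputable def levelCoeff (f : (Fin n → Bool) → ℝ) (k : ℕ) (w : Fin n → Bool) : ℝ :=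
  if hammingWt w = k then boolFourier f w else 0

theorem sum_pi_fin_succ {M : Type*} [AddCommMonoid M] (F : (Fin (n + 1) → Bool) → M) :
    ∑ x, F x = ∑ b, ∑ x : Fin n → Bool, F (Fin.cons b x) := by
  rw [← (Fin.consEquiv fun _ => Bool).sum_comp, Fintype.sum_prod_type]
  rfl

theorem hammingWt_cons (b : Bool) (w : Fin n → Bool) :
    hammingWt (Fin.cons b w : Fin (n + 1) → Bool) = (if b then 1 else 0) + hammingWt w := by
  rw [hammingWt, hammingWt, Fin.card_filter_univ_succ']
  simp

theorem sum_mul_walshSum (f c : (Fin n → Bool) → ℝ) :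
    ∑ x, f x * walshSum c x = 2 ^ n * ∑ w, c w * boolFourier f w := by
  simp only [walshSum, mul_sum]
  rw [sum_comm]
  refine sum_congr rfl fun w _ => ?_
  rw [boolFourier, mul_left_comm, mul_div_cancel₀ _ (by positivity), mul_sum]
  exact sum_congr rfl fun x _ => by rw [walsh]; ring

theorem walsh_cons (a b : Bool) (w x : Fin n → Bool) :
    walsh (Fin.cons a w : Fin (n + 1) → Bool) (Fin.cons b x) =
      (if a && b then -1 else 1) * walsh w x := by
  rw [walsh, walsh, Fin.card_filter_univ_succ']
  cases a <;> cases b <;> simp [pow_add]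

theorem walshSum_cons (c : (Fin (n + 1) → Bool) → ℝ) (b : Bool) (x : Fin n → Bool) :
    walshSum c (Fin.cons b x) = walshSum (fun w => c (Fin.cons false w)) x
      + (if b then -1 else 1) * walshSum (fun w => c (Fin.cons true w)) x := by
  rw [walshSum, sum_pi_fin_succ, Fintype.sum_bool, add_comm, walshSum, walshSum, mul_sum]
  congr 1 <;> refine sum_congr rfl fun w _ => ?_ <;> rw [walsh_cons] <;> cases b <;> simp

theorem noiseStability_nonneg {ρ : ℝ} (hρ : 0 ≤ ρ) (c : (Fin n → Bool) → ℝ) :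
    0 ≤ noiseStability ρ c :=
  sum_nonneg fun w _ => by positivity

theorem noiseStability_cons (ρ : ℝ) (c : (Fin (n + 1) → Bool) → ℝ) :
    noiseStability ρ c = noiseStability ρ (fun w => c (Fin.cons false w))
      + ρ * noiseStability ρ (fun w => c (Fin.cons true w)) := by
  simp only [noiseStability, sum_pi_fin_succ, Fintype.sum_bool, hammingWt_cons, mul_sum]
  rw [add_comm]
  congr 1 <;> refine sum_congr rfl fun w _ => ?_ <;> simp [pow_succ]
  ring

theorem sum_walshSum_pow_le {m : ℕ} (hm : 0 < m) (c : (Fin n → Bool) → ℝ) :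
    ∑ x, walshSum c x ^ (2 * m) ≤ 2 ^ n * noiseStability (2 * m - 1) c ^ m := by
  have hρ := two_mul_sub_one_nonneg hm
  induction n with
  | zero => simp [walshSum, walsh, noiseStability, hammingWt, pow_mul]
  | succ n ih =>
    set c₀ : (Fin n → Bool) → ℝ := fun w => c (Fin.cons false w)
    set c₁ : (Fin n → Bool) → ℝ := fun w => c (Fin.cons true w)
    have hsplit : ∑ x, walshSum c x ^ (2 * m) = ∑ x, ((walshSum c₀ x + walshSum c₁ x) ^ (2 * m)
        + (walshSum c₀ x - walshSum c₁ x) ^ (2 * m)) := by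
      rw [sum_pi_fin_succ, Fintype.sum_bool, add_comm, ← sum_add_distrib]
      simp [walshSum_cons, c₀, c₁, sub_eq_add_neg]
    have hminkowski := sum_add_pow_le_of_sum_pow_le univ (m := m) (N := 2 ^ n)
      (G := fun x => walshSum c₀ x ^ 2) (H := fun x => (2 * m - 1) * walshSum c₁ x ^ 2)
      (fun _ _ => by positivity) (fun _ _ => by positivity) (by positivity)
      (noiseStability_nonneg hρ c₀) (mul_nonneg hρ (noiseStability_nonneg hρ c₁))
      (by simpa [← pow_mul] using ih c₀)
      (by
        simp only [mul_pow, ← mul_sum, ← pow_mul]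
        rw [mul_left_comm]
        exact mul_le_mul_of_nonneg_left (ih c₁) (by positivity))
    calc ∑ x, walshSum c x ^ (2 * m)
        ≤ ∑ x, 2 * (walshSum c₀ x ^ 2 + (2 * m - 1) * walshSum c₁ x ^ 2) ^ m := by
          rw [hsplit]; exact sum_le_sum fun x _ => add_pow_add_sub_pow_le _ _ m
      _ ≤ 2 ^ (n + 1) * noiseStability (2 * m - 1) c ^ m := by
          rw [← mul_sum, noiseStability_cons, pow_succ', mul_assoc]
          exact mul_le_mul_of_nonneg_left hminkowski zero_le_two

theorem levelWeight_eq_sum_mul_walshSum (f : (Fin n → Bool) → ℝ) (k : ℕ) :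
    levelWeight f k = ∑ x, f x / 2 ^ n * walshSum (levelCoeff f k) x := by
  have h2n : (2 : ℝ) ^ n ≠ 0 := by positivity
  simp only [div_mul_eq_mul_div, ← sum_div, sum_mul_walshSum, mul_div_cancel_left₀ _ h2n]
  simp only [levelWeight, levelCoeff, sum_filter]
  exact sum_congr rfl fun w _ => by split_ifs <;> ring

theorem noiseStability_levelCoeff (ρ : ℝ) (f : (Fin n → Bool) → ℝ) (k : ℕ) :
    noiseStability ρ (levelCoeff f k) = ρ ^ k * levelWeight f k := by
  simp only [noiseStability, levelWeight, levelCoeff, sum_filter, mul_sum]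
  exact sum_congr rfl fun w _ => by split_ifs with h <;> simp [h]

theorem levelWeight_pow_le {f : (Fin n → Bool) → ℝ} {K : ℝ} (hf₀ : ∀ x, 0 ≤ f x)
    (hfK : ∀ x, f x ≤ K) (hf₁ : ∑ x, f x = 2 ^ n) (k : ℕ) {m : ℕ} (hm : 0 < m) :
    levelWeight f k ^ m ≤ K * ((2 * m - 1) ^ k) ^ m := by
  set W := levelWeight f k
  set g := walshSum (levelCoeff f k)
  have h2n : (0 : ℝ) < 2 ^ n := by positivity
  have hK₀ : 0 ≤ K := (hf₀ fun _ => false).trans (hfK _)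
  have jensen : W ^ (2 * m) ≤ ∑ x, f x / 2 ^ n * g x ^ (2 * m) := by
    rw [show W = _ from levelWeight_eq_sum_mul_walshSum f k]
    exact Real.pow_arith_mean_le_arith_mean_pow_of_even univ _ _
      (fun x _ => div_nonneg (hf₀ x) h2n.le) (by rw [← sum_div, hf₁, div_self h2n.ne'])
      (even_two_mul m)
  have density_le : ∑ x, f x / 2 ^ n * g x ^ (2 * m) ≤ K / 2 ^ n * ∑ x, g x ^ (2 * m) := by
    rw [mul_sum]
    refine sum_le_sum fun x _ => ?_
    gcongr
    · exact (even_two_mul m).pow_nonneg _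
    · exact hfK x
  have key : (W ^ m) ^ 2 ≤ K * ((2 * m - 1) ^ k) ^ m * W ^ m := by
    calc (W ^ m) ^ 2 = W ^ (2 * m) := by ring
      _ ≤ K / 2 ^ n * ∑ x, g x ^ (2 * m) := jensen.trans density_le
      _ ≤ K / 2 ^ n * (2 ^ n * noiseStability (2 * m - 1) (levelCoeff f k) ^ m) :=
          mul_le_mul_of_nonneg_left (sum_walshSum_pow_le hm _) (by positivity)
      _ = K * ((2 * m - 1) ^ k) ^ m * W ^ m := by
          rw [noiseStability_levelCoeff]; field_simp; ring
  have hW₀ : 0 ≤ W ^ m := pow_nonneg (sum_nonneg fun w _ => sq_nonneg _) m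
  have hρ := two_mul_sub_one_nonneg hm
  have hR₀ : 0 ≤ K * ((2 * m - 1) ^ k) ^ m := by positivity
  nlinarith

theorem levelWeight_indicator_pow_le {A : Finset (Fin n → Bool)} (hA : A.Nonempty)
    (k : ℕ) {m : ℕ} (hm : 0 < m) :
    levelWeight (fun x => (if x ∈ A then (1 : ℝ) else 0) / ((A.card : ℝ) / 2 ^ n)) k ^ m
      ≤ 1 / ((A.card : ℝ) / 2 ^ n) * ((2 * m - 1) ^ k) ^ m := by
  have hμ : (0 : ℝ) < A.card / 2 ^ n := by have := hA.card_pos; positivity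
  refine levelWeight_pow_le (fun x => by positivity)
    (fun x => by gcongr; split_ifs <;> norm_num) ?_ k hm
  rw [← sum_div, sum_boole, filter_mem_eq_inter, univ_inter]
  field_simp

end Walsh

theorem exists_nat_pos_le_mul_and_two_mul_sub_one_le (L : ℝ) {k : ℕ} (hk : 0 < k) :
    ∃ m : ℕ, 0 < m ∧ L ≤ k * m ∧ 2 * (m : ℝ) - 1 ≤ 2 * max 1 (2 * L / k) := by
  have hk' : (0 : ℝ) < k := by exact_mod_cast hk
  refine ⟨max 1 ⌈L / k⌉₊, by positivity, ?_, ?_⟩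
  · rw [← div_le_iff₀' hk']
    exact (Nat.le_ceil _).trans (by exact_mod_cast le_max_right _ _)
  · rcases le_total ⌈L / k⌉₊ 1 with h | h
    · rw [max_eq_left h]
      have := le_max_left 1 (2 * L / k)
      push_cast
      linarith
    · rw [max_eq_right h]
      have hLk : 0 ≤ L / k := by
        by_contra! hneg
        rw [Nat.ceil_eq_zero.mpr hneg.le] at h
        omega
      have := Nat.ceil_lt_add_one hLk
      have := le_max_left 1 (2 * L / k)
      have : 2 * (L / k) ≤ max 1 (2 * L / k) := mul_div_assoc 2 L k ▸ le_max_right _ _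
      linarith

/-- Level-`k` Fourier weight of a normalized indicator: there is a universal constant
`C > 0` such that for every nonempty `A ⊆ {0,1}ⁿ` of measure `μ = |A|/2ⁿ`, with
`f = 1_A/μ`, and every `k ≥ 1`, `∑_{|w|=k} f̂(w)² ≤ (C·max(1, 2 log(1/μ)/k))^k`. -/
theorem level_k_weight_bound :
    ∃ C : ℝ, 0 < C ∧ ∀ (n : ℕ) (A : Finset (Fin n → Bool)), A.Nonempty → ∀ k : ℕ, 1 ≤ k →
      ∑ w ∈ univ.filter (fun w => hammingWt w = k),
          boolFourier (fun x => (if x ∈ A then (1 : ℝ) else 0) / ((A.card : ℝ) / 2 ^ n)) w ^ 2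
        ≤ (C * max 1 (2 * Real.log (1 / ((A.card : ℝ) / 2 ^ n)) / k)) ^ k := by
  refine ⟨2 * Real.exp 1, by positivity, fun n A hA k hk => ?_⟩
  have hμ₀ : (0 : ℝ) < 1 / (A.card / 2 ^ n) := by have := hA.card_pos; positivity
  obtain ⟨m, hm, hLm, hρ⟩ :=
    exists_nat_pos_le_mul_and_two_mul_sub_one_le (Real.log (1 / ((A.card : ℝ) / 2 ^ n))) hk
  have hρ₀ := two_mul_sub_one_nonneg hm
  have hμ : 1 / ((A.card : ℝ) / 2 ^ n) ≤ (Real.exp 1 ^ k) ^ m := by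
    rw [← Real.exp_log hμ₀, ← Real.exp_nat_mul, ← Real.exp_nat_mul]
    exact Real.exp_le_exp.mpr (by linarith)
  show levelWeight _ k ≤ _
  calc _ ≤ (Real.exp 1 * (2 * m - 1)) ^ k := by
        refine le_of_pow_le_pow_left₀ hm.ne' (by positivity) ?_
        calc _ ≤ _ := levelWeight_indicator_pow_le hA k hm
          _ ≤ (Real.exp 1 ^ k) ^ m * ((2 * m - 1) ^ k) ^ m := by gcongr
          _ = ((Real.exp 1 * (2 * m - 1)) ^ k) ^ m := by rw [← mul_pow, ← mul_pow]
    _ ≤ _ := by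
        rw [mul_comm 2 (Real.exp 1), mul_assoc]
        exact pow_le_pow_left₀ (mul_nonneg (Real.exp_pos 1).le hρ₀)
          (mul_le_mul_of_nonneg_left hρ (Real.exp_pos 1).le) k
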